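/- Let a > 0, ε > 0, b = −(2 + ε)a, and s = σ + iω ∈ ℂ with σ ≥ 0. Let α, β ∈ ℝ with α > 0 and β < 0. Then for every n ∈ ℕ the modulus of the convergence factor of the OWR algorithm with overlap n satisfies |ρ_n(s, α, β)| < 1, where ρ_n(s, α, β) = ((α + 1 − λ₁)/(λ₁(1 + α) − 1)) · ((λ₁ + β − 1)/(1 + (β − 1)λ₁)) · (1/λ₁²)ⁿ with λ₁ = λ₁(s). -/

import Mathlib

/-- The root `λ₁(s) = ((s - b) + √((b - s)² - 4a²))/(2a)` of the characteristic equation,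
with the principal branch of the complex square root. -/
noncomputable def lam1 (a b : ℝ) (s : ℂ) : ℂ :=
  ((s - (b : ℂ)) + (((b : ℂ) - s) ^ 2 - 4 * (a : ℂ) ^ 2) ^ ((1 : ℂ) / 2)) / (2 * (a : ℂ))

/-- The convergence factor of the OWR algorithm with overlap `n` and parameters `α, β`:
`ρ_n(s,α,β) = ((α+1-λ₁)/(λ₁(1+α)-1)) ((λ₁+β-1)/(1+(β-1)λ₁)) (1/λ₁²)ⁿ` with `λ₁ = λ₁(s)`. -/
noncomputable def rhoOWR (a b : ℝ) (n : ℕ) (s : ℂ) (α β : ℝ) : ℂ :=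
  (((α : ℂ) + 1 - lam1 a b s) / (lam1 a b s * (1 + (α : ℂ)) - 1)) *
    ((lam1 a b s + (β : ℂ) - 1) / (1 + ((β : ℂ) - 1) * lam1 a b s)) *
    (1 / (lam1 a b s) ^ 2) ^ n


/-!
Since the principal square root has nonnegative real part, `Re λ₁(s) ≥ (Re s - b)/(2a) > 1`, so
`|λ₁| > 1`. Each of the first two factors of `ρ_n` has the form `(λ - c)/(cλ - 1)` with real `c`,
`|c| > 1` (`c = 1 + α`, resp. `c = 1 - β`), and `|cλ - 1|² - |λ - c|² = (c² - 1)(|λ|² - 1) > 0`;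
the last factor `|λ₁|^(-2n)` is at most `1`.
-/

open Complex

lemma Complex.re_cpow_one_half_nonneg (w : ℂ) : 0 ≤ (w ^ ((1 : ℂ) / 2)).re := by
  rcases eq_or_ne w 0 with rfl | hw
  · simp
  rw [cpow_def_of_ne_zero hw, exp_re]
  have him : (log w * (1 / 2)).im = arg w / 2 := by simp [log_im, div_eq_mul_inv]
  refine mul_nonneg (Real.exp_pos _).le (Real.cos_nonneg_of_neg_pi_div_two_le_of_le ?_ ?_) <;>
    rw [him] <;> linarith [neg_pi_lt_arg w, arg_le_pi w]

lemma one_lt_re_lam1 {a b : ℝ} (ha : 0 < a) {s : ℂ} (hs : 2 * a < s.re - b) :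
    1 < (lam1 a b s).re := by
  have hsqrt := re_cpow_one_half_nonneg (((b : ℂ) - s) ^ 2 - 4 * (a : ℂ) ^ 2)
  rw [lam1, show 2 * (a : ℂ) = ((2 * a : ℝ) : ℂ) by push_cast; ring, div_ofReal_re,
    lt_div_iff₀ (by positivity), add_re, sub_re, ofReal_re]
  linarith

lemma Complex.normSq_mul_sub_one_sub_normSq_sub (z : ℂ) (c : ℝ) :
    normSq (c * z - 1) - normSq (z - c) = (c ^ 2 - 1) * (normSq z - 1) := by
  simp only [normSq_apply, sub_re, sub_im, mul_re, mul_im, ofReal_re, ofReal_im, one_re, one_im]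
  ring

lemma Complex.norm_sub_div_mul_sub_one_lt_one {z : ℂ} (hz : 1 < ‖z‖) {c : ℝ} (hc : 1 < |c|) :
    ‖(z - c) / (c * z - 1)‖ < 1 := by
  have hc2 : 1 < c ^ 2 := (one_lt_sq_iff_one_lt_abs c).2 hc
  have hz2 : 1 < normSq z := by rw [← Complex.sq_norm]; nlinarith
  have hlt : ‖z - c‖ < ‖c * z - 1‖ := by
    refine lt_of_pow_lt_pow_left₀ 2 (norm_nonneg _) ?_
    rw [Complex.sq_norm, Complex.sq_norm]
    nlinarith [normSq_mul_sub_one_sub_normSq_sub z c]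
  rw [norm_div]
  exact (div_lt_one ((norm_nonneg _).trans_lt hlt)).2 hlt

/-- For `a > 0`, `ε > 0`, `b = -(2 + ε)a`, `Re s ≥ 0`, `α > 0` and `β < 0`, the modulus of
the OWR convergence factor with any overlap `n ∈ ℕ` is strictly less than 1. -/
theorem owr_convergence_factor_lt_one (a ε α β : ℝ) (ha : 0 < a) (hε : 0 < ε)
    (hα : 0 < α) (hβ : β < 0) (s : ℂ) (hs : 0 ≤ s.re) (n : ℕ) :
    ‖rhoOWR a (-(2 + ε) * a) n s α β‖ < 1 := by
  set L := lam1 a (-(2 + ε) * a) s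
  have hL : 1 < ‖L‖ :=
    (one_lt_re_lam1 ha (by nlinarith)).trans_le (re_le_norm L)
  have hαfactor : ‖((α : ℂ) + 1 - L) / (L * (1 + α) - 1)‖ < 1 := by
    rw [show (α : ℂ) + 1 - L = -(L - (1 + α : ℝ)) by push_cast; ring,
      show L * (1 + α) - 1 = (1 + α : ℝ) * L - 1 by push_cast; ring, neg_div, norm_neg]
    exact norm_sub_div_mul_sub_one_lt_one hL (by rw [abs_of_pos] <;> linarith)
  have hβfactor : ‖(L + β - 1) / (1 + (β - 1) * L)‖ < 1 := by
    rw [show L + β - 1 = L - (1 - β : ℝ) by push_cast; ring,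
      show 1 + (β - 1) * L = -((1 - β : ℝ) * L - 1) by push_cast; ring, div_neg, norm_neg]
    exact norm_sub_div_mul_sub_one_lt_one hL (by rw [abs_of_pos] <;> linarith)
  have hpow : ‖(1 / L ^ 2) ^ n‖ ≤ 1 := by
    rw [norm_pow, norm_div, norm_one, norm_pow]
    exact pow_le_one₀ (by positivity) (div_le_one_of_le₀ (one_le_pow₀ hL.le) (by positivity))
  rw [rhoOWR, norm_mul, norm_mul]
  exact mul_lt_one_of_nonneg_of_lt_one_left (by positivity)
    (mul_lt_one_of_nonneg_of_lt_one_left (norm_nonneg _) hαfactor hβfactor.le) hpow
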